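/- Let Λ_{2k,h} = 2 ∑_{j=1}^{k} (-1)^{j+1} a_{j,k} χ_{jh}² with a_{j,k} = C(2k,k+j)/C(2k,k), and define α_{l,k} = 2 ∑_{j=|l|+1}^{k} (-1)^{j+1} (j - |l|) a_{j,k} / j² for |l| ≤ k-1. Then for k ≥ 2 and h > 0: (i) Λ_{2k,h}(x) = ∑_{l=-(k-1)}^{k-1} α_{l,k} χ_h²(x - lh) for all x; and (ii) ∑_{l=-(k-1)}^{k-1} |α_{l,k}| = γ_k := 2 ∑_{j odd, 1≤j≤k} a_{j,k}/j², given that sign(α_{l,k}) = (-1)^l. -/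

import Mathlib

/-- Triangle kernel: `chiSq h x = (1/h) max 0 (1 - |x|/h)`. -/
noncomputable def chiSq (h : ℝ) (x : ℝ) : ℝ := (1 / h) * max 0 (1 - |x| / h)

/-- `a_{j,k} = C(2k, k+j) / C(2k, k)`. -/
noncomputable def aCoef (j k : ℕ) : ℝ := (Nat.choose (2 * k) (k + j) : ℝ) / (Nat.choose (2 * k) k : ℝ)

/-- `α_{l,k} = 2 ∑_{j=|l|+1}^{k} (-1)^{j+1} (j - |l|) a_{j,k} / j²`. -/
noncomputable def alphaCoef (l : ℤ) (k : ℕ) : ℝ :=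
  2 * ∑ j ∈ Finset.Icc (l.natAbs + 1) k,
    (-1 : ℝ) ^ (j + 1) * ((j : ℝ) - (l.natAbs : ℝ)) * aCoef j k / (j : ℝ) ^ 2


lemma max_second_diff (s : ℝ) :
    max 0 (s + 1) - 2 * max 0 s + max 0 (s - 1) = max 0 (1 - |s|) := by
  rcases le_total s 0 with hs | hs
  · rw [abs_of_nonpos hs]
    rcases le_total s (-1) with h1 | h1
    · rw [max_eq_left (by linarith : s + 1 ≤ 0), max_eq_left hs,
        max_eq_left (by linarith : s - 1 ≤ 0), max_eq_left (by linarith : 1 - -s ≤ 0)]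
      ring
    · rw [max_eq_right (by linarith : 0 ≤ s + 1), max_eq_left hs,
        max_eq_left (by linarith : s - 1 ≤ 0), max_eq_right (by linarith : 0 ≤ 1 - -s)]
      ring
  · rw [abs_of_nonneg hs]
    rcases le_total s 1 with h1 | h1
    · rw [max_eq_right (by linarith : 0 ≤ s + 1), max_eq_right hs,
        max_eq_left (by linarith : s - 1 ≤ 0), max_eq_right (by linarith : 0 ≤ 1 - s)]
      ring
    · rw [max_eq_right (by linarith : 0 ≤ s + 1), max_eq_right hs,
        max_eq_right (by linarith : 0 ≤ s - 1), max_eq_left (by linarith : 1 - s ≤ 0)]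
      ring

lemma tent_pair (c t : ℝ) (hc : 1 ≤ c) :
    max 0 (1 - |t - c|) + max 0 (1 - |t + c|) = max 0 (1 - |(|t| - c)|) := by
  rcases le_total 0 t with ht | ht
  · rw [abs_of_nonneg ht, abs_of_nonneg (by linarith : (0:ℝ) ≤ t + c),
      max_eq_left (by linarith : 1 - (t + c) ≤ 0)]
    ring
  · rw [abs_of_nonpos ht, abs_of_nonpos (by linarith : t - c ≤ 0),
      max_eq_left (by linarith : 1 - -(t - c) ≤ 0),
      show -t - c = -(t + c) by ring, abs_neg]
    ring

lemma Icc_int_insert (a : ℕ) :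
    Finset.Icc (-((a:ℤ) + 1)) ((a:ℤ) + 1) =
      insert (-((a:ℤ) + 1)) (insert ((a:ℤ) + 1) (Finset.Icc (-(a:ℤ)) (a:ℤ))) := by
  ext x
  simp only [Finset.mem_Icc, Finset.mem_insert]
  omega

lemma tent_sum (a : ℕ) (t : ℝ) :
    ∑ l ∈ Finset.Icc (-(a:ℤ)) (a:ℤ), max 0 (1 - |t - (l:ℝ)|) =
      max 0 ((a:ℝ) + 1 - |t|) - max 0 ((a:ℝ) - |t|) := by
  induction a with
  | zero =>
      simp only [Nat.cast_zero, neg_zero, Finset.Icc_self, Finset.sum_singleton, Int.cast_zero,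
        sub_zero, CharP.cast_eq_zero, zero_add, zero_sub]
      rw [max_eq_left (by simpa using abs_nonneg t : -|t| ≤ 0)]
      ring
  | succ a ih =>
      have hset : Finset.Icc (-((a+1:ℕ):ℤ)) ((a+1:ℕ):ℤ) =
          insert (-((a:ℤ) + 1)) (insert ((a:ℤ) + 1) (Finset.Icc (-(a:ℤ)) (a:ℤ))) := by
        push_cast
        exact Icc_int_insert a
      rw [hset, Finset.sum_insert (by simp only [Finset.mem_insert, Finset.mem_Icc]; omega), Finset.sum_insert (by simp only [Finset.mem_Icc]; omega), ih]
      have hp := tent_pair ((a:ℝ) + 1) t (by push_cast; linarith)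
      have hd := max_second_diff ((a:ℝ) + 1 - |t|)
      rw [show (a:ℝ) + 1 - |t| + 1 = (a:ℝ) + 1 + 1 - |t| by ring,
        show (a:ℝ) + 1 - |t| - 1 = (a:ℝ) - |t| by ring,
        abs_sub_comm] at hd
      push_cast
      rw [show t - -((a:ℝ) + 1) = t + ((a:ℝ) + 1) by ring]
      linarith

lemma tent_decomp (j : ℕ) (t : ℝ) :
    ∑ l ∈ Finset.Icc (-((j:ℤ) - 1)) ((j:ℤ) - 1),
        ((j:ℝ) - (l.natAbs : ℝ)) * max 0 (1 - |t - (l:ℝ)|) = max 0 ((j:ℝ) - |t|) := by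
  induction j with
  | zero =>
      simp only [Nat.cast_zero, zero_sub, neg_neg, CharP.cast_eq_zero]
      rw [Finset.Icc_eq_empty (by norm_num)]
      simp [max_eq_left (by simpa using abs_nonneg t : -|t| ≤ 0)]
  | succ i ih =>
      match i, ih with
      | 0, _ =>
          norm_num
      | (i+1 : ℕ), ih =>
          have hset : Finset.Icc (-((i:ℤ) + 1 + 1 - 1)) ((i:ℤ) + 1 + 1 - 1) =
              insert (-((i:ℤ) + 1)) (insert ((i:ℤ) + 1) (Finset.Icc (-(i:ℤ)) (i:ℤ))) := by
            rw [show -((i:ℤ) + 1 + 1 - 1) = -((i:ℤ)+1) by ring, show (i:ℤ) + 1 + 1 - 1 = (i:ℤ)+1 by ring]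
            exact Icc_int_insert i
          push_cast
          rw [hset, Finset.sum_insert (by simp only [Finset.mem_insert, Finset.mem_Icc]; omega),
            Finset.sum_insert (by simp only [Finset.mem_Icc]; omega)]
          have hsplit : ∑ l ∈ Finset.Icc (-(i:ℤ)) (i:ℤ),
              ((i:ℝ) + 1 + 1 - (l.natAbs : ℝ)) * max 0 (1 - |t - (l:ℝ)|) =
              (∑ l ∈ Finset.Icc (-(i:ℤ)) (i:ℤ),
                ((i:ℝ) + 1 - (l.natAbs : ℝ)) * max 0 (1 - |t - (l:ℝ)|)) +
              ∑ l ∈ Finset.Icc (-(i:ℤ)) (i:ℤ), max 0 (1 - |t - (l:ℝ)|) := by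
            rw [← Finset.sum_add_distrib]
            exact Finset.sum_congr rfl fun l _ => by ring
          have ih' : ∑ l ∈ Finset.Icc (-(i:ℤ)) (i:ℤ),
              ((i:ℝ) + 1 - (l.natAbs : ℝ)) * max 0 (1 - |t - (l:ℝ)|)
              = max 0 ((i:ℝ) + 1 - |t|) := by
            have := ih
            push_cast at this
            rw [show -(((i:ℤ)+1) - 1) = -(i:ℤ) by ring, show ((i:ℤ)+1) - 1 = (i:ℤ) by ring] at this
            exact this
          rw [hsplit, ih', tent_sum]
          have hp := tent_pair ((i:ℝ) + 1) t (by linarith [Nat.cast_nonneg (α := ℝ) i])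
          have hd := max_second_diff ((i:ℝ) + 1 - |t|)
          rw [show (i:ℝ) + 1 - |t| + 1 = (i:ℝ) + 1 + 1 - |t| by ring,
            show (i:ℝ) + 1 - |t| - 1 = (i:ℝ) - |t| by ring,
            abs_sub_comm] at hd
          have hnat1 : (((-((i:ℤ) + 1)).natAbs : ℝ)) = (i:ℝ) + 1 := by
            rw [show (-((i:ℤ) + 1)).natAbs = i + 1 from by omega]
            push_cast; ring
          have hnat2 : (((((i:ℤ) + 1)).natAbs : ℝ)) = (i:ℝ) + 1 := by
            rw [show (((i:ℤ) + 1)).natAbs = i + 1 from by omega]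
            push_cast; ring
          rw [hnat1, hnat2, Int.cast_neg]
          push_cast
          rw [show t - -((i:ℝ) + 1) = t + ((i:ℝ) + 1) by ring]
          linarith

lemma chiSq_decomp (j : ℕ) (hj : 1 ≤ j) (h x : ℝ) (hh : 0 < h) :
    chiSq ((j:ℝ) * h) x =
      ∑ l ∈ Finset.Icc (-((j:ℤ) - 1)) ((j:ℤ) - 1),
        (((j:ℝ) - (l.natAbs : ℝ)) / (j:ℝ)^2) * chiSq h (x - (l:ℝ) * h) := by
  have hj0 : (0:ℝ) < (j:ℝ) := by exact_mod_cast hj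
  have key := tent_decomp j (x / h)
  have habs : ∀ l : ℤ, |x / h - (l:ℝ)| = |x - (l:ℝ) * h| / h := by
    intro l
    rw [show x / h - (l:ℝ) = (x - (l:ℝ) * h) / h by field_simp, abs_div, abs_of_pos hh]
  have hrhs : ∑ l ∈ Finset.Icc (-((j:ℤ) - 1)) ((j:ℤ) - 1),
      (((j:ℝ) - (l.natAbs : ℝ)) / (j:ℝ)^2) * chiSq h (x - (l:ℝ) * h)
      = (1 / ((j:ℝ)^2 * h)) * max 0 ((j:ℝ) - |x / h|) := by
    rw [← key, Finset.mul_sum]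
    refine Finset.sum_congr rfl fun l _ => ?_
    rw [chiSq, habs l]
    field_simp
  rw [hrhs, chiSq]
  have harg : |x| / ((j:ℝ) * h) = (|x / h|) / (j:ℝ) := by
    rw [abs_div, abs_of_pos hh, div_div, mul_comm]
  rw [harg]
  have hmax : max 0 ((j:ℝ) - |x / h|) = (j:ℝ) * max 0 (1 - |x / h| / (j:ℝ)) := by
    rcases le_total (1 - |x / h| / (j:ℝ)) 0 with hc | hc
    · rw [max_eq_left hc, max_eq_left, mul_zero]
      have hu : (j:ℝ) ≤ |x / h| := by
        have := (one_le_div hj0).mp (by linarith)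
        linarith
      linarith
    · rw [max_eq_right hc, max_eq_right]
      · field_simp
      · have hu : |x / h| ≤ (j:ℝ) := by
          have := (div_le_one hj0).mp (by linarith)
          linarith
        linarith
  rw [hmax, ← mul_assoc]
  congr 1
  field_simp

lemma sum_reflect (n : ℕ) (f : ℕ → ℝ) :
    ∑ l ∈ Finset.Icc (-(n:ℤ)) (n:ℤ), f l.natAbs = f 0 + 2 * ∑ m ∈ Finset.Icc 1 n, f m := by
  induction n with
  | zero => simp
  | succ n ih =>
      have hset : Finset.Icc (-((n+1:ℕ):ℤ)) ((n+1:ℕ):ℤ) =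
          insert (-((n:ℤ) + 1)) (insert ((n:ℤ) + 1) (Finset.Icc (-(n:ℤ)) (n:ℤ))) := by
        push_cast
        exact Icc_int_insert n
      rw [hset, Finset.sum_insert (by simp only [Finset.mem_insert, Finset.mem_Icc]; omega),
        Finset.sum_insert (by simp only [Finset.mem_Icc]; omega), ih,
        Finset.sum_Icc_succ_top (by omega : 1 ≤ n + 1),
        show (-((n:ℤ) + 1)).natAbs = n + 1 from by omega,
        show (((n:ℤ) + 1)).natAbs = n + 1 from by omega]
      ring

lemma Hsum (n : ℕ) :
    ∑ m ∈ Finset.Icc 1 n, ((-1:ℝ))^m = if Even n then 0 else -1 := by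
  induction n with
  | zero => simp
  | succ n ih =>
      rw [Finset.sum_Icc_succ_top (by omega : 1 ≤ n + 1), ih]
      rcases Nat.even_or_odd n with he | ho
      · simp [he, Nat.even_add_one, he.neg_one_pow, pow_succ]
      · simp [Nat.not_even_iff_odd.mpr ho, Nat.even_add_one, ho.neg_one_pow, pow_succ,
          Nat.even_add_one.mpr (Nat.not_even_iff_odd.mpr ho)]

lemma Gsum (n : ℕ) :
    ∑ m ∈ Finset.Icc 1 n, ((-1:ℝ))^m * m =
      if Even n then (n:ℝ)/2 else -((n:ℝ)+1)/2 := by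
  induction n with
  | zero => simp
  | succ n ih =>
      rw [Finset.sum_Icc_succ_top (by omega : 1 ≤ n + 1), ih]
      rcases Nat.even_or_odd n with he | ho
      · rw [if_pos he, if_neg (by simp [Nat.even_add_one, he])]
        rw [pow_succ, he.neg_one_pow]
        push_cast
        ring
      · rw [if_neg (Nat.not_even_iff_odd.mpr ho), if_pos (Nat.even_add_one.mpr
          (Nat.not_even_iff_odd.mpr ho)), pow_succ, ho.neg_one_pow]
        push_cast
        ring

lemma Tsum (j : ℕ) (hj : 1 ≤ j) :
    ∑ l ∈ Finset.Icc (-((j:ℤ) - 1)) ((j:ℤ) - 1),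
      (-1:ℝ)^l.natAbs * ((j:ℝ) - (l.natAbs : ℝ)) = if Odd j then 1 else 0 := by
  obtain ⟨n, rfl⟩ := Nat.exists_eq_add_of_le hj
  have hset : (-(((1+n:ℕ):ℤ) - 1)) = -(n:ℤ) := by push_cast; ring
  have hset2 : ((((1+n:ℕ):ℤ) - 1)) = (n:ℤ) := by push_cast; ring
  rw [hset, hset2, sum_reflect n (fun m => (-1:ℝ)^m * (((1+n:ℕ):ℝ) - (m:ℝ)))]
  have hsplit : ∑ m ∈ Finset.Icc 1 n, (-1:ℝ)^m * (((1+n:ℕ):ℝ) - (m:ℝ)) =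
      ((1+n:ℕ):ℝ) * (∑ m ∈ Finset.Icc 1 n, ((-1:ℝ))^m)
        - ∑ m ∈ Finset.Icc 1 n, ((-1:ℝ))^m * m := by
    rw [Finset.mul_sum, ← Finset.sum_sub_distrib]
    exact Finset.sum_congr rfl fun m _ => by ring
  rw [hsplit, Hsum, Gsum]
  rcases Nat.even_or_odd n with he | ho
  · rw [if_pos he, if_pos he, if_pos (by simpa [Nat.odd_add_one, Nat.add_comm] using he : Odd (1+n))]
    push_cast
    ring
  · rw [if_neg (Nat.not_even_iff_odd.mpr ho), if_neg (Nat.not_even_iff_odd.mpr ho),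
      if_neg (by simp [Nat.add_comm 1 n, Nat.odd_add_one, Nat.not_even_iff_odd.mpr ho] : ¬ Odd (1+n))]
    push_cast
    ring

theorem lambda_decomposition (k : ℕ) (hk : 2 ≤ k) (h : ℝ) (hh : 0 < h) :
    (∀ x : ℝ, 2 * ∑ j ∈ Finset.Icc 1 k, (-1 : ℝ) ^ (j + 1) * aCoef j k * chiSq ((j : ℝ) * h) x =
      ∑ l ∈ Finset.Icc (-((k : ℤ) - 1)) ((k : ℤ) - 1), alphaCoef l k * chiSq h (x - (l : ℝ) * h)) ∧
    ((∀ l : ℤ, (-1 : ℝ) ^ l.natAbs * alphaCoef l k = |alphaCoef l k|) →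
      ∑ l ∈ Finset.Icc (-((k : ℤ) - 1)) ((k : ℤ) - 1), |alphaCoef l k| =
        2 * ∑ j ∈ (Finset.Icc 1 k).filter (fun j => Odd j), aCoef j k / (j : ℝ) ^ 2) := by
  have hcomm : ∀ (j : ℕ) (l : ℤ),
      j ∈ Finset.Icc 1 k ∧ l ∈ Finset.Icc (-((j:ℤ) - 1)) ((j:ℤ) - 1) ↔
      j ∈ Finset.Icc (l.natAbs + 1) k ∧ l ∈ Finset.Icc (-((k:ℤ) - 1)) ((k:ℤ) - 1) := by
    intro j l
    simp only [Finset.mem_Icc]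
    omega
  have hcomm2 : ∀ (l : ℤ) (j : ℕ),
      l ∈ Finset.Icc (-((k:ℤ) - 1)) ((k:ℤ) - 1) ∧ j ∈ Finset.Icc (l.natAbs + 1) k ↔
      l ∈ Finset.Icc (-((j:ℤ) - 1)) ((j:ℤ) - 1) ∧ j ∈ Finset.Icc 1 k := by
    intro l j
    simp only [Finset.mem_Icc]
    omega
  constructor
  · intro x
    have step1 : ∀ j ∈ Finset.Icc 1 k,
        (-1 : ℝ) ^ (j + 1) * aCoef j k * chiSq ((j : ℝ) * h) x =
        ∑ l ∈ Finset.Icc (-((j:ℤ) - 1)) ((j:ℤ) - 1),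
          ((-1 : ℝ) ^ (j + 1) * ((j : ℝ) - (l.natAbs : ℝ)) * aCoef j k / (j : ℝ) ^ 2) *
            chiSq h (x - (l:ℝ) * h) := by
      intro j hj
      rw [chiSq_decomp j (Finset.mem_Icc.mp hj).1 h x hh, Finset.mul_sum]
      exact Finset.sum_congr rfl fun l _ => by ring
    rw [Finset.sum_congr rfl step1, Finset.sum_comm' hcomm, Finset.mul_sum]
    refine Finset.sum_congr rfl fun l _ => ?_
    simp only [alphaCoef, mul_assoc, Finset.sum_mul, Finset.mul_sum]
  · intro hsign
    have hstep : ∀ l ∈ Finset.Icc (-((k:ℤ) - 1)) ((k:ℤ) - 1), |alphaCoef l k| =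
        ∑ j ∈ Finset.Icc (l.natAbs + 1) k,
          (-1:ℝ)^l.natAbs *
            ((-1 : ℝ) ^ (j + 1) * ((j : ℝ) - (l.natAbs : ℝ)) * aCoef j k / (j : ℝ) ^ 2) * 2 := by
      intro l _
      rw [← hsign l, alphaCoef, Finset.mul_sum, Finset.mul_sum]
      exact Finset.sum_congr rfl fun j _ => by ring
    rw [Finset.sum_congr rfl hstep, Finset.sum_comm' hcomm2]
    have hinner : ∀ j ∈ Finset.Icc 1 k,
        (∑ l ∈ Finset.Icc (-((j:ℤ) - 1)) ((j:ℤ) - 1),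
          (-1:ℝ)^l.natAbs *
            ((-1 : ℝ) ^ (j + 1) * ((j : ℝ) - (l.natAbs : ℝ)) * aCoef j k / (j : ℝ) ^ 2) * 2) =
        if Odd j then 2 * (aCoef j k / (j : ℝ) ^ 2) else 0 := by
      intro j hj
      have hT := Tsum j (Finset.mem_Icc.mp hj).1
      have hfact : (∑ l ∈ Finset.Icc (-((j:ℤ) - 1)) ((j:ℤ) - 1),
          (-1:ℝ)^l.natAbs *
            ((-1 : ℝ) ^ (j + 1) * ((j : ℝ) - (l.natAbs : ℝ)) * aCoef j k / (j : ℝ) ^ 2) * 2) =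
          (∑ l ∈ Finset.Icc (-((j:ℤ) - 1)) ((j:ℤ) - 1),
            (-1:ℝ)^l.natAbs * ((j:ℝ) - (l.natAbs : ℝ))) *
          ((-1 : ℝ) ^ (j + 1) * aCoef j k / (j : ℝ) ^ 2 * 2) := by
        rw [Finset.sum_mul]
        exact Finset.sum_congr rfl fun l _ => by ring
      rw [hfact, hT]
      rcases Nat.even_or_odd j with he | ho
      · rw [if_neg (Nat.not_odd_iff_even.mpr he), if_neg (Nat.not_odd_iff_even.mpr he), zero_mul]
      · rw [if_pos ho, if_pos ho, one_mul,
          show (-1:ℝ)^(j+1) = 1 from (Odd.add_one ho).neg_one_pow]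
        ring
    rw [Finset.sum_congr rfl hinner, ← Finset.sum_filter, Finset.mul_sum]
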